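/- Let f, d : {0,1}^n → ℝ be nonnegative functions, let λ ∈ ℝ, and suppose (Ad)(x) ≥ λ·d(x) for every x ∈ {0,1}^n, where A is the adjacency operator of the Hamming graph. Let g = f ∗ d. Then ⟨Ag, g⟩ ≥ λ·⟨g, g⟩ = λ·E[g²]. -/

import Mathlib

/-- The adjacency operator of the Hamming graph on `{0,1}^n`. -/
def adjOp {n : ℕ} (f : (Fin n → Bool) → ℝ) (x : Fin n → Bool) : ℝ :=
  ∑ y ∈ Finset.univ.filter fun y => hammingDist x y = 1, f y

/-- Inner product `⟨f, g⟩ = E_x[f(x)·g(x)]`, `x` uniform in `{0,1}^n`. -/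
noncomputable def cubeInner {n : ℕ} (f g : (Fin n → Bool) → ℝ) : ℝ :=
  (∑ x, f x * g x) / 2 ^ n

/-- Convolution on `{0,1}^n`: `(f ∗ d)(x) = E_y[f(y)·d(x ⊕ y)]`, `y` uniform. -/
noncomputable def cubeConv {n : ℕ} (f d : (Fin n → Bool) → ℝ) (x : Fin n → Bool) : ℝ :=
  (∑ y, f y * d fun i => xor (x i) (y i)) / 2 ^ n

open Finset

/-!
The adjacency operator commutes with translations of the cube, hence with convolution:
`A (f ∗ d) = f ∗ A d`. Since `f ≥ 0`, convolving the pointwise bound `A d ≥ λ d` with `f` gives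
`A g ≥ λ g` pointwise, and pairing with `g ≥ 0` yields `⟨A g, g⟩ ≥ λ ⟨g, g⟩`.
-/

theorem hammingDist_xor_right {ι : Type*} [Fintype ι] (x y z : ι → Bool) :
    hammingDist (fun i => xor (x i) (z i)) (fun i => xor (y i) (z i)) = hammingDist x y :=
  hammingDist_comp (fun i b => xor b (z i)) fun _ _ _ => Bool.xor_left_inj.mp

theorem xor_xor_cancel_right {ι : Type*} (x z : ι → Bool) :
    (fun i => xor (xor (x i) (z i)) (z i)) = x := by
  funext i
  simp

theorem adjOp_comp_xor {n : ℕ} (d : (Fin n → Bool) → ℝ) (z x : Fin n → Bool) :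
    adjOp (fun w => d fun i => xor (w i) (z i)) x = adjOp d fun i => xor (x i) (z i) := by
  refine sum_nbij' (fun w i => xor (w i) (z i)) (fun w i => xor (w i) (z i)) ?_ ?_
    (fun w _ => xor_xor_cancel_right w z) (fun w _ => xor_xor_cancel_right w z) fun _ _ => rfl
  · simp [hammingDist_xor_right]
  · intro w hw
    simpa [← hammingDist_xor_right x _ z, xor_xor_cancel_right] using hw

theorem adjOp_cubeConv {n : ℕ} (f d : (Fin n → Bool) → ℝ) (x : Fin n → Bool) :
    adjOp (cubeConv f d) x = cubeConv f (adjOp d) x := by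
  calc adjOp (cubeConv f d) x
      = (∑ y, f y * adjOp (fun w => d fun i => xor (w i) (y i)) x) / 2 ^ n := by
        simp only [adjOp, cubeConv, ← sum_div, mul_sum]
        rw [sum_comm]
    _ = cubeConv f (adjOp d) x := by simp only [adjOp_comp_xor, cubeConv]

theorem cubeConv_nonneg {n : ℕ} {f d : (Fin n → Bool) → ℝ} (hf : ∀ x, 0 ≤ f x)
    (hd : ∀ x, 0 ≤ d x) (x : Fin n → Bool) : 0 ≤ cubeConv f d x :=
  div_nonneg (sum_nonneg fun y _ => mul_nonneg (hf y) (hd _)) (by positivity)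

theorem cubeConv_mono_right {n : ℕ} {f d d' : (Fin n → Bool) → ℝ} (hf : ∀ x, 0 ≤ f x)
    (hdd' : ∀ x, d x ≤ d' x) (x : Fin n → Bool) : cubeConv f d x ≤ cubeConv f d' x := by
  unfold cubeConv
  gcongr with y
  exacts [hf y, hdd' _]

theorem cubeConv_const_mul {n : ℕ} (f d : (Fin n → Bool) → ℝ) (c : ℝ) (x : Fin n → Bool) :
    cubeConv f (fun w => c * d w) x = c * cubeConv f d x := by
  simp only [cubeConv, mul_div_assoc', mul_sum, mul_left_comm]

theorem cubeInner_mono_left {n : ℕ} {u v g : (Fin n → Bool) → ℝ} (huv : ∀ x, u x ≤ v x)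
    (hg : ∀ x, 0 ≤ g x) : cubeInner u g ≤ cubeInner v g := by
  unfold cubeInner
  gcongr with x
  exacts [hg x, huv x]

theorem cubeInner_const_mul_left {n : ℕ} (u g : (Fin n → Bool) → ℝ) (c : ℝ) :
    cubeInner (fun x => c * u x) g = c * cubeInner u g := by
  simp only [cubeInner, mul_div_assoc', mul_sum, mul_assoc]

/-- If `f, d ≥ 0` and `Ad ≥ λ·d` pointwise, then `g = f ∗ d` satisfies
`⟨Ag, g⟩ ≥ λ·⟨g, g⟩` (and `⟨g, g⟩ = E[g²]`). -/
theorem rayleigh_lower_bound (n : ℕ) (f d : (Fin n → Bool) → ℝ)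
    (hf : ∀ x, 0 ≤ f x) (hd : ∀ x, 0 ≤ d x) (lam : ℝ)
    (hAd : ∀ x, adjOp d x ≥ lam * d x) :
    cubeInner (adjOp (cubeConv f d)) (cubeConv f d) ≥
      lam * cubeInner (cubeConv f d) (cubeConv f d) := by
  set g := cubeConv f d
  have hAg : ∀ x, lam * g x ≤ adjOp g x := fun x => by
    rw [adjOp_cubeConv, ← cubeConv_const_mul]
    exact cubeConv_mono_right hf hAd x
  rw [ge_iff_le, ← cubeInner_const_mul_left]
  exact cubeInner_mono_left hAg (cubeConv_nonneg hf hd)
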